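/- arXiv:1504.04616 — 2 statements merged into one kernel-verified Lean document; each statement's English description precedes it below -/
import Mathlib

section
/- Let G = (V_s, V_p, E) be a balanced bipartite graph with V_s = {v_s : v ∈ [n]} and V_p = {v_p : v ∈ [n]}, and let ψ(G) be the digraph on vertex set [n] with arc set {(u,v) : (u_s, v_p) ∈ E}. Then r(ψ(G)) ≤ 2·r(G) + 1. -/
/-!
Two constructions. First, every finite bipartite graph has an overlap labeling, so `r(G)` is
attained. Order the edges lexicographically and give the edge `uv` a block
`B(u,v) = B(previous edge at v) ++ (uv)^(3^rank(u,v)) ++ B(previous edge at u)`. The blocks of the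
edges at `u` are then nested suffixes of each other and those at `v` nested prefixes, so `u` is
labelled by padding followed by the block of its last edge, and `v` by the block of its last edge
followed by padding. Conversely, a common suffix/prefix of two blocks either lies inside a
predecessor block, or it reaches into the filler run of the later edge; since the runs grow
geometrically, its end letter then identifies a shared endpoint.

Second, from an optimal overlap labeling `(ℓₛ, ℓₚ)` of length `r`, label a vertex `w` of `ψ(G)` by
`ℓₚ(w) · #w · ℓₛ(w)`, with a separator `#w` that occurs nowhere else. Overlaps of length at most
`r` are exactly the overlaps of `ℓₛ(a)` with `ℓₚ(b)`, while a proper overlap of length in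
`(r, 2r]` would align the separator of `b` with a letter of `ℓₛ(a)`.
-/

namespace Readability

/-- `x` overlaps `y` by `i`: `1 ≤ i ≤ min |x| |y|` and the length-`i` suffix of `x`
equals the length-`i` prefix of `y`. -/
def OverlapsBy {α : Type*} (x y : List α) (i : ℕ) : Prop :=
  1 ≤ i ∧ i ≤ min x.length y.length ∧ x.drop (x.length - i) = y.take i

/-- `ov x y`: the minimum `i` such that `x` overlaps `y` by `i`, or `0` if none exists. -/
noncomputable def ov {α : Type*} (x y : List α) : ℕ := sInf {i | OverlapsBy x y i}

/-- An overlap labeling of length `r` of the bipartite graph with parts `Vs`, `Vp` and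
edge relation `E ⊆ Vs × Vp`. -/
def IsOverlapLabeling {α Vs Vp : Type*} (E : Vs → Vp → Prop) (r : ℕ)
    (ls : Vs → List α) (lp : Vp → List α) : Prop :=
  (∀ u, (ls u).length = r) ∧ (∀ v, (lp v).length = r) ∧
    ∀ u v, E u v ↔ ∃ i, OverlapsBy (ls u) (lp v) i

/-- Bipartite readability: the least `r` admitting an overlap labeling of length `r`
(over the alphabet `ℕ`). -/
noncomputable def bReadability {Vs Vp : Type*} (E : Vs → Vp → Prop) : ℕ :=
  sInf {r | ∃ (ls : Vs → List ℕ) (lp : Vp → List ℕ), IsOverlapLabeling E r ls lp}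

/-- An injective overlap labeling of length `r` of the digraph with arc relation `A`. -/
def IsInjOverlapLabeling {V : Type*} (A : V → V → Prop) (r : ℕ) (ℓ : V → List ℕ) : Prop :=
  (∀ v, (ℓ v).length = r) ∧ Function.Injective ℓ ∧
    ∀ u v, A u v ↔ 0 < ov (ℓ u) (ℓ v) ∧ ov (ℓ u) (ℓ v) < r

/-- Digraph readability: the least `r` admitting an injective overlap labeling of length `r`. -/
noncomputable def dReadability {V : Type*} (A : V → V → Prop) : ℕ :=
  sInf {r | ∃ ℓ : V → List ℕ, IsInjOverlapLabeling A r ℓ}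

/-- A decomposition of size `k`: a weight function on edges with values in `{1,…,k}`. -/
def IsDecomposition {Vs Vp : Type*} (E : Vs → Vp → Prop) (k : ℕ) (w : Vs → Vp → ℕ) : Prop :=
  ∀ u v, E u v → 1 ≤ w u v ∧ w u v ≤ k

/-- An induced `P₄` with consecutive edges `(s1,p1), (s2,p1), (s2,p2)`. -/
def InducedP4 {Vs Vp : Type*} (E : Vs → Vp → Prop) (s1 s2 : Vs) (p1 p2 : Vp) : Prop :=
  s1 ≠ s2 ∧ p1 ≠ p2 ∧ E s1 p1 ∧ E s2 p1 ∧ E s2 p2 ∧ ¬ E s1 p2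

/-- The `P₄`-rule: on each induced `P₄`, if the middle edge has maximum weight then its weight
is at least the sum of the weights of the two outer edges. -/
def SatisfiesP4Rule {Vs Vp : Type*} (E : Vs → Vp → Prop) (w : Vs → Vp → ℕ) : Prop :=
  ∀ s1 s2 p1 p2, InducedP4 E s1 s2 p1 p2 →
    w s2 p1 = max (w s1 p1) (max (w s2 p1) (w s2 p2)) →
    w s1 p1 + w s2 p2 ≤ w s2 p1

/-- The strict `P₄`-rule: as the `P₄`-rule, with strict inequality. -/
def SatisfiesStrictP4Rule {Vs Vp : Type*} (E : Vs → Vp → Prop) (w : Vs → Vp → ℕ) : Prop :=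
  ∀ s1 s2 p1 p2, InducedP4 E s1 s2 p1 p2 →
    w s2 p1 = max (w s1 p1) (max (w s2 p1) (w s2 p2)) →
    w s1 p1 + w s2 p2 < w s2 p1

/-- `C₄`-freeness of a bipartite graph. -/
def C4Free {Vs Vp : Type*} (E : Vs → Vp → Prop) : Prop :=
  ∀ (s1 s2 : Vs) (p1 p2 : Vp), s1 ≠ s2 → p1 ≠ p2 →
    ¬ (E s1 p1 ∧ E s1 p2 ∧ E s2 p1 ∧ E s2 p2)

/-- The subgraph `G_i` of a decomposition: edges of weight exactly `i`. -/
def SubAt {Vs Vp : Type*} (E : Vs → Vp → Prop) (w : Vs → Vp → ℕ) (i : ℕ) :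
    Vs → Vp → Prop :=
  fun u v => E u v ∧ w u v = i

/-- A bipartite edge relation is a disjoint union of bicliques iff it has no induced `P₄`,
i.e. whenever `(s1,p1), (s2,p1), (s2,p2)` are edges, so is `(s1,p2)`. -/
def BicliqueUnion {Vs Vp : Type*} (H : Vs → Vp → Prop) : Prop :=
  ∀ s1 s2 p1 p2, H s1 p1 → H s2 p1 → H s2 p2 → H s1 p2

/-- The HUB-rule for a decomposition `w`:
(i) every level graph `G_i` is a disjoint union of bicliques, and
(ii) non-isolated twins in `G_i` (for `i ≥ 2`) are twins in every `G_j` with `1 ≤ j ≤ i-1`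
(stated for both parts of the bipartition). -/
def SatisfiesHUBRule {Vs Vp : Type*} (E : Vs → Vp → Prop) (w : Vs → Vp → ℕ) : Prop :=
  (∀ i, 1 ≤ i → BicliqueUnion (SubAt E w i)) ∧
  (∀ i, 2 ≤ i → ∀ u v : Vs, u ≠ v → (∃ p, SubAt E w i u p) →
      (∀ p, SubAt E w i u p ↔ SubAt E w i v p) →
      ∀ j, 1 ≤ j → j ≤ i - 1 → ∀ p, SubAt E w j u p ↔ SubAt E w j v p) ∧
  (∀ i, 2 ≤ i → ∀ u v : Vp, u ≠ v → (∃ s, SubAt E w i s u) →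
      (∀ s, SubAt E w i s u ↔ SubAt E w i s v) →
      ∀ j, 1 ≤ j → j ≤ i - 1 → ∀ s, SubAt E w j s u ↔ SubAt E w j s v)

/-- The HUB number: minimum size of a decomposition satisfying the HUB-rule. -/
noncomputable def hubNumber {Vs Vp : Type*} (E : Vs → Vp → Prop) : ℕ :=
  sInf {k | ∃ w, IsDecomposition E k w ∧ SatisfiesHUBRule E w}

/-- The underlying undirected simple graph on `Vs ⊕ Vp` of a bipartite graph. -/
def underlyingGraph {Vs Vp : Type*} (E : Vs → Vp → Prop) : SimpleGraph (Vs ⊕ Vp) where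
  Adj x y := (∃ u v, x = Sum.inl u ∧ y = Sum.inr v ∧ E u v) ∨
    (∃ u v, x = Sum.inr v ∧ y = Sum.inl u ∧ E u v)
  symm := by
    constructor
    rintro x y (⟨u, v, rfl, rfl, h⟩ | ⟨u, v, rfl, rfl, h⟩)
    · exact Or.inr ⟨u, v, rfl, rfl, h⟩
    · exact Or.inl ⟨u, v, rfl, rfl, h⟩
  loopless := by
    constructor
    rintro x (⟨u, v, h1, h2, -⟩ | ⟨u, v, h1, h2, -⟩) <;> subst h1 <;> simp_all

/-- The radius of a graph: the least `r` such that some vertex has eccentricity at most `r`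
(for a finite connected graph this is `min_u max_v dist(u,v)`). -/
noncomputable def graphRadius {V : Type*} (G : SimpleGraph V) : ℕ :=
  sInf {r | ∃ u, ∀ v, G.dist u v ≤ r}

/-- Distinctness of two vertices `u, v` of the same part (here the `Vs`-part, with
neighborhoods taken in `Vp`): `max(|N(u)∖N(v)|, |N(v)∖N(u)|)`. -/
noncomputable def DTpair {Vs Vp : Type*} (E : Vs → Vp → Prop) (u v : Vs) : ℕ :=
  max {p : Vp | E u p ∧ ¬ E v p}.ncard {p : Vp | E v p ∧ ¬ E u p}.ncard

/-- Distinctness of a bipartite graph: the minimum of `DT(u,v)` over pairs of distinct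
vertices in the same part. -/
noncomputable def distinctness {Vs Vp : Type*} (E : Vs → Vp → Prop) : ℕ :=
  sInf ({d | ∃ u v : Vs, u ≠ v ∧ d = DTpair E u v} ∪
        {d | ∃ u v : Vp, u ≠ v ∧ d = DTpair (fun p s => E s p) u v})

/-- A bipartite graph fails to be a matching iff some vertex has degree at least 2. -/
def NotMatching {Vs Vp : Type*} (E : Vs → Vp → Prop) : Prop :=
  (∃ u : Vs, ∃ p1 p2 : Vp, p1 ≠ p2 ∧ E u p1 ∧ E u p2) ∨
  (∃ p : Vp, ∃ u1 u2 : Vs, u1 ≠ u2 ∧ E u1 p ∧ E u2 p)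

open Function List

section Lists

variable {α β : Type*} {t s p x y : List α} {c : α} {i k : ℕ}

theorem exists_overlapsBy_iff : (∃ i, OverlapsBy x y i) ↔ ∃ t ≠ [], t <:+ x ∧ t <+: y := by
  constructor
  · rintro ⟨i, hi, hle, heq⟩
    refine ⟨y.take i, ?_, heq ▸ drop_suffix _ _, take_prefix _ _⟩
    simp only [ne_eq, take_eq_nil_iff, not_or]
    constructor <;> [omega; exact ne_nil_of_length_pos (by omega)]
  · rintro ⟨t, ht, hx, hy⟩
    refine ⟨t.length, length_pos_iff.2 ht, le_min hx.length_le hy.length_le, ?_⟩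
    rw [← suffix_iff_eq_drop.1 hx, ← prefix_iff_eq_take.1 hy]

theorem overlapsBy_map_iff {f : α → β} (hf : Injective f) :
    OverlapsBy (x.map f) (y.map f) i ↔ OverlapsBy x y i := by
  simp only [OverlapsBy, length_map, ← map_drop, ← map_take, (map_injective_iff.2 hf).eq_iff]

theorem overlapsBy_append_append_iff (x y : List α) (hs : i ≤ s.length) (hp : i ≤ p.length) :
    OverlapsBy (x ++ s) (p ++ y) i ↔ OverlapsBy s p i := by
  have hd : x.length + s.length - i = x.length + (s.length - i) := by omega
  simp only [OverlapsBy, length_append, take_append_of_le_length hp, hd,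
    drop_length_add_append]
  constructor <;> rintro ⟨h1, -, h3⟩ <;> exact ⟨h1, by omega, h3⟩

theorem not_overlapsBy_append_cons {a : α} (s' : List α) (hc : c ∉ s)
    (h1 : p.length < i) (h2 : i ≤ s.length + p.length) :
    ¬ OverlapsBy (x ++ a :: s) (p ++ c :: s') i := by
  rintro ⟨-, hle, heq⟩
  have hx : i ≤ x.length + (s.length + 1) := by simpa using hle.trans (min_le_left _ _)
  have h := congrArg (·[p.length]?) heq
  simp only [getElem?_take_of_lt h1, getElem?_drop] at h
  rw [getElem?_append_right (by simp; omega), getElem?_append_right le_rfl, Nat.sub_self,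
    getElem?_cons_zero, show (x ++ a :: s).length - i + p.length - x.length
      = (s.length + p.length - i) + 1 by simp; omega, getElem?_cons_succ] at h
  exact hc (mem_of_getElem? h)

theorem suffix_of_suffix_replicate_append (h : t <:+ replicate k c ++ s) (hc : c ∉ t) :
    t <:+ s := by
  induction k with
  | zero => simpa using h
  | succ k ih =>
    rcases suffix_cons_iff.1 h with rfl | h
    · simp at hc
    · exact ih h

theorem prefix_of_prefix_append_replicate (h : t <+: s ++ replicate k c) (hc : c ∉ t) :
    t <+: s := by
  rw [← reverse_suffix] at h ⊢
  rw [reverse_append, reverse_replicate] at h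
  exact suffix_of_suffix_replicate_append h (by simpa using hc)

theorem _root_.List.IsSuffix.getLast?_eq (h : t <:+ s) (ht : t ≠ []) :
    t.getLast? = s.getLast? := by
  obtain ⟨u, rfl⟩ := h
  simp [getLast?_append, getLast?_eq_some_getLast ht]

theorem _root_.List.IsPrefix.head?_eq (h : t <+: s) (ht : t ≠ []) : t.head? = s.head? := by
  obtain ⟨u, rfl⟩ := h
  simp [head?_append, head?_eq_some_head ht]

theorem getLast?_of_prefix_append_replicate_append (h : t <+: s ++ replicate k c ++ x)
    (h1 : s.length < t.length) (h2 : t.length ≤ s.length + k) : t.getLast? = some c := by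
  have h' : t <+: s ++ replicate k c :=
    prefix_of_prefix_length_le h (prefix_append _ _) (by simpa using h2)
  rw [prefix_iff_eq_take, take_append, take_replicate, take_of_length_le (by omega)] at h'
  rw [h', getLast?_append, getLast?_replicate, if_neg (by omega)]
  rfl

theorem head?_of_suffix_append_replicate_append (h : t <:+ s ++ replicate k c ++ x)
    (h1 : x.length < t.length) (h2 : t.length ≤ k + x.length) : t.head? = some c := by
  rw [← reverse_prefix, reverse_append, reverse_append, reverse_replicate, ← append_assoc] at h
  rw [← getLast?_reverse]
  exact getLast?_of_prefix_append_replicate_append (s := x.reverse) (x := s.reverse) h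
    (by simpa using h1) (by simp; omega)

theorem ov_pos_and_lt_iff {L : ℕ} : 0 < ov x y ∧ ov x y < L ↔ ∃ i < L, OverlapsBy x y i := by
  constructor
  · rintro ⟨hpos, hlt⟩
    have hne : {i | OverlapsBy x y i}.Nonempty := by
      by_contra h
      rw [Set.not_nonempty_iff_eq_empty] at h
      simp [ov, h] at hpos
    exact ⟨ov x y, hlt, Nat.sInf_mem hne⟩
  · rintro ⟨i, hi, hov⟩
    have hmem : OverlapsBy x y (ov x y) := Nat.sInf_mem (s := {i | OverlapsBy x y i}) ⟨i, hov⟩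
    exact ⟨hmem.1, (Nat.sInf_le hov).trans_lt hi⟩

end Lists

section Construction

variable {m n : ℕ} (E : Fin m → Fin n → Prop)

/-- `inl (u, v)` is the filler letter of the edge `uv`; every vertex has its own padding letter
among the `inr` letters. -/
abbrev Letter (m n : ℕ) := (Fin m × Fin n) ⊕ (Fin m ⊕ Fin n)

def rank (u : Fin m) (v : Fin n) : ℕ := finProdFinEquiv (u, v)

theorem rank_lt_rank_left {x u : Fin m} (h : x < u) (v : Fin n) : rank x v < rank u v := by
  simp only [rank, finProdFinEquiv_apply_val]
  exact Nat.add_lt_add_left (Nat.mul_lt_mul_of_pos_left h v.pos) _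

theorem rank_lt_rank_right (u : Fin m) {y v : Fin n} (h : y < v) : rank u y < rank u v := by
  simp only [rank, finProdFinEquiv_apply_val]
  exact Nat.add_lt_add_right h _

theorem rank_injective {u x : Fin m} {y v : Fin n} (h : rank u y = rank x v) : u = x ∧ y = v :=
  Prod.mk.inj (finProdFinEquiv.injective (Fin.ext h))

open scoped Classical in
/-- The bound `k` is a natural number so that `k = n` selects the last edge at `u`. -/
noncomputable def prevNbrS (u : Fin m) (k : ℕ) : WithBot (Fin n) :=
  (Finset.univ.filter fun y : Fin n => E u y ∧ y.1 < k).max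

open scoped Classical in
noncomputable def prevNbrP (k : ℕ) (v : Fin n) : WithBot (Fin m) :=
  (Finset.univ.filter fun x : Fin m => E x v ∧ x.1 < k).max

variable {E}

theorem prevNbrS_spec {u : Fin m} {k : ℕ} {y : Fin n} (h : prevNbrS E u k = y) :
    E u y ∧ y.1 < k := by
  classical
  simpa [prevNbrS] using Finset.mem_of_max h

theorem prevNbrP_spec {k : ℕ} {v : Fin n} {x : Fin m} (h : prevNbrP E k v = x) :
    E x v ∧ x.1 < k := by
  classical
  simpa [prevNbrP] using Finset.mem_of_max h

theorem exists_prevNbrS_ge {u : Fin m} {y : Fin n} (hy : E u y) {k : ℕ} (hk : y.1 < k) :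
    ∃ z : Fin n, prevNbrS E u k = z ∧ y ≤ z := by
  classical
  have hmem : y ∈ Finset.univ.filter fun y' : Fin n => E u y' ∧ y'.1 < k := by simp [hy, hk]
  obtain ⟨z, hz⟩ := Finset.max_of_mem hmem
  exact ⟨z, hz, WithBot.coe_le_coe.1 (hz ▸ Finset.le_max hmem)⟩

theorem exists_prevNbrP_ge {x : Fin m} {v : Fin n} (hx : E x v) {k : ℕ} (hk : x.1 < k) :
    ∃ z : Fin m, prevNbrP E k v = z ∧ x ≤ z := by
  classical
  have hmem : x ∈ Finset.univ.filter fun x' : Fin m => E x' v ∧ x'.1 < k := by simp [hx, hk]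
  obtain ⟨z, hz⟩ := Finset.max_of_mem hmem
  exact ⟨z, hz, WithBot.coe_le_coe.1 (hz ▸ Finset.le_max hmem)⟩

variable (E)

noncomputable def block (u : Fin m) (v : Fin n) : List (Letter m n) :=
  (match _hx : prevNbrP E u v with
    | none => []
    | some x => block x v) ++
  replicate (3 ^ rank u v) (.inl (u, v)) ++
  (match _hy : prevNbrS E u v with
    | none => []
    | some y => block u y)
termination_by u.1 + v.1
decreasing_by
  · have := (prevNbrP_spec _hx).2; omega
  · have := (prevNbrS_spec _hy).2; omega

noncomputable def prevBlockS (u : Fin m) (k : ℕ) : List (Letter m n) :=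
  match prevNbrS E u k with
  | none => []
  | some y => block E u y

noncomputable def prevBlockP (k : ℕ) (v : Fin n) : List (Letter m n) :=
  match prevNbrP E k v with
  | none => []
  | some x => block E x v

theorem block_eq (u : Fin m) (v : Fin n) : block E u v =
    prevBlockP E u v ++ replicate (3 ^ rank u v) (.inl (u, v)) ++ prevBlockS E u v := by
  rw [block, prevBlockP, prevBlockS]
  congr 2 <;> split <;> simp_all

theorem prevBlockS_eq_nil_or (u : Fin m) (k : ℕ) :
    prevBlockS E u k = [] ∨ ∃ y : Fin n, E u y ∧ y.1 < k ∧ prevBlockS E u k = block E u y := by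
  unfold prevBlockS
  split
  · exact .inl rfl
  · rename_i y hy
    exact .inr ⟨y, (prevNbrS_spec hy).1, (prevNbrS_spec hy).2, rfl⟩

theorem prevBlockP_eq_nil_or (k : ℕ) (v : Fin n) :
    prevBlockP E k v = [] ∨ ∃ x : Fin m, E x v ∧ x.1 < k ∧ prevBlockP E k v = block E x v := by
  unfold prevBlockP
  split
  · exact .inl rfl
  · rename_i x hx
    exact .inr ⟨x, (prevNbrP_spec hx).1, (prevNbrP_spec hx).2, rfl⟩

variable {E}

theorem block_suffix_prevBlockS {u : Fin m} {y : Fin n} (hy : E u y) {k : ℕ} (hk : y.1 < k) :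
    block E u y <:+ prevBlockS E u k := by
  induction k using Nat.strong_induction_on generalizing y with
  | _ k ih =>
  obtain ⟨z, hz, hyz⟩ := exists_prevNbrS_ge hy hk
  have hprev : prevBlockS E u k = block E u z := by simp only [prevBlockS, hz]
  rw [hprev]
  rcases hyz.eq_or_lt with rfl | hlt
  · exact suffix_refl _
  · rw [block_eq E u z]
    exact (ih z.1 (prevNbrS_spec hz).2 hy hlt).trans (suffix_append _ _)

theorem block_prefix_prevBlockP {x : Fin m} {v : Fin n} (hx : E x v) {k : ℕ} (hk : x.1 < k) :
    block E x v <+: prevBlockP E k v := by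
  induction k using Nat.strong_induction_on generalizing x with
  | _ k ih =>
  obtain ⟨z, hz, hxz⟩ := exists_prevNbrP_ge hx hk
  have hprev : prevBlockP E k v = block E z v := by simp only [prevBlockP, hz]
  rw [hprev]
  rcases hxz.eq_or_lt with rfl | hlt
  · exact prefix_refl _
  · rw [block_eq E z v, append_assoc]
    exact (ih z.1 (prevNbrP_spec hz).2 hx hlt).trans (prefix_append _ _)

variable (E)

theorem length_block_le (u : Fin m) (v : Fin n) : (block E u v).length ≤ 3 ^ (rank u v + 1) := by
  induction h : u.1 + v.1 using Nat.strong_induction_on generalizing u v with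
  | _ k ih =>
  have hP : (prevBlockP E u v).length ≤ 3 ^ rank u v := by
    rcases prevBlockP_eq_nil_or E u v with hP | ⟨x, -, hx, hP⟩
    · simp [hP]
    · rw [hP]
      exact (ih _ (by omega) x v rfl).trans
        (Nat.pow_le_pow_right (by norm_num) (rank_lt_rank_left hx v))
  have hS : (prevBlockS E u v).length ≤ 3 ^ rank u v := by
    rcases prevBlockS_eq_nil_or E u v with hS | ⟨y, -, hy, hS⟩
    · simp [hS]
    · rw [hS]
      exact (ih _ (by omega) u y rfl).trans
        (Nat.pow_le_pow_right (by norm_num) (rank_lt_rank_right u hy))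
  rw [block_eq, length_append, length_append, length_replicate, pow_succ]
  omega

theorem length_block_le_pow_mul (u : Fin m) (v : Fin n) : (block E u v).length ≤ 3 ^ (m * n) :=
  (length_block_le E u v).trans (Nat.pow_le_pow_right (by norm_num) (finProdFinEquiv (u, v)).isLt)

theorem isLeft_of_mem_block {u : Fin m} {v : Fin n} {c : Letter m n} (hc : c ∈ block E u v) :
    c.isLeft := by
  induction h : u.1 + v.1 using Nat.strong_induction_on generalizing u v with
  | _ k ih =>
  rw [block_eq] at hc
  simp only [mem_append, mem_replicate] at hc
  rcases hc with (hc | ⟨-, rfl⟩) | hc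
  · rcases prevBlockP_eq_nil_or E u v with hP | ⟨x, -, hx, hP⟩
    · simp [hP] at hc
    · exact ih _ (by omega) (hP ▸ hc) rfl
  · rfl
  · rcases prevBlockS_eq_nil_or E u v with hS | ⟨y, -, hy, hS⟩
    · simp [hS] at hc
    · exact ih _ (by omega) (hS ▸ hc) rfl

theorem getLast?_block (u : Fin m) (v : Fin n) :
    ∃ y, (block E u v).getLast? = some (.inl (u, y)) := by
  induction h : v.1 using Nat.strong_induction_on generalizing v with
  | _ k ih =>
  rw [block_eq]
  rcases prevBlockS_eq_nil_or E u v with hS | ⟨y, -, hy, hS⟩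
  · exact ⟨v, by simp [hS, getLast?_replicate]⟩
  · obtain ⟨y₀, hy₀⟩ := ih _ (h ▸ hy) y rfl
    exact ⟨y₀, by simp [hS, getLast?_append, hy₀]⟩

theorem head?_block (u : Fin m) (v : Fin n) :
    ∃ x, (block E u v).head? = some (.inl (x, v)) := by
  induction h : u.1 using Nat.strong_induction_on generalizing u with
  | _ k ih =>
  rw [block_eq]
  rcases prevBlockP_eq_nil_or E u v with hP | ⟨x, -, hx, hP⟩
  · exact ⟨u, by simp [hP, head?_replicate]⟩
  · obtain ⟨x₀, hx₀⟩ := ih _ (h ▸ hx) x rfl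
    exact ⟨x₀, by simp [hP, head?_append, hx₀]⟩

variable {E}

theorem edge_of_suffix_block_of_prefix_block {u x : Fin m} {y v : Fin n} (hy : E u y)
    (hx : E x v) {t : List (Letter m n)} (ht : t ≠ []) (hts : t <:+ block E u y)
    (htp : t <+: block E x v) : E u v := by
  induction h : y.1 + x.1 using Nat.strong_induction_on generalizing y x with
  | _ k ih =>
  have htpos : 0 < t.length := length_pos_iff.2 ht
  by_cases hS : t.length ≤ (prevBlockS E u y).length
  · rcases prevBlockS_eq_nil_or E u y with hnil | ⟨y', hy', hlt, hS'⟩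
    · rw [hnil, length_nil] at hS; omega
    · have hts' : t <:+ block E u y' := hS' ▸ suffix_of_suffix_length_le hts
        (block_eq E u y ▸ suffix_append _ _) hS
      exact ih _ (by omega) hy' hx hts' htp rfl
  by_cases hP : t.length ≤ (prevBlockP E x v).length
  · rcases prevBlockP_eq_nil_or E x v with hnil | ⟨x', hx', hlt, hP'⟩
    · rw [hnil, length_nil] at hP; omega
    · have htp' : t <+: block E x' v := hP' ▸ prefix_of_prefix_length_le htp
        (block_eq E x v ▸ append_assoc _ _ _ ▸ prefix_append _ _) hP
      exact ih _ (by omega) hy hx' hts htp' rfl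
  -- `t` reaches into the filler run of the later of the two edges
  rcases lt_trichotomy (rank u y) (rank x v) with hlt | heq | hgt
  · have hlen : t.length ≤ 3 ^ rank x v := hts.length_le.trans <| (length_block_le E u y).trans
      (Nat.pow_le_pow_right (by norm_num) hlt)
    have hlast := getLast?_of_prefix_append_replicate_append (block_eq E x v ▸ htp) (by omega)
      (by omega)
    obtain ⟨y₀, hy₀⟩ := getLast?_block E u y
    rw [hts.getLast?_eq ht, hy₀] at hlast
    obtain ⟨rfl, -⟩ := Prod.mk.inj (Sum.inl.inj (Option.some.inj hlast))
    exact hx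
  · obtain ⟨rfl, rfl⟩ := rank_injective heq
    exact hx
  · have hlen : t.length ≤ 3 ^ rank u y := htp.length_le.trans <| (length_block_le E x v).trans
      (Nat.pow_le_pow_right (by norm_num) hgt)
    have hhead := head?_of_suffix_append_replicate_append (block_eq E u y ▸ hts) (by omega)
      (by omega)
    obtain ⟨x₀, hx₀⟩ := head?_block E x v
    rw [htp.head?_eq ht, hx₀] at hhead
    obtain ⟨-, rfl⟩ := Prod.mk.inj (Sum.inl.inj (Option.some.inj hhead))
    exact hy

variable (E)

noncomputable def labelS (u : Fin m) : List (Letter m n) :=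
  replicate (3 ^ (m * n) - (prevBlockS E u n).length) (.inr (.inl u)) ++ prevBlockS E u n

noncomputable def labelP (v : Fin n) : List (Letter m n) :=
  prevBlockP E m v ++ replicate (3 ^ (m * n) - (prevBlockP E m v).length) (.inr (.inr v))

theorem length_prevBlockS_le (u : Fin m) (k : ℕ) : (prevBlockS E u k).length ≤ 3 ^ (m * n) := by
  rcases prevBlockS_eq_nil_or E u k with h | ⟨y, -, -, h⟩ <;> rw [h]
  · exact Nat.zero_le _
  · exact length_block_le_pow_mul E u y

theorem length_prevBlockP_le (k : ℕ) (v : Fin n) : (prevBlockP E k v).length ≤ 3 ^ (m * n) := by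
  rcases prevBlockP_eq_nil_or E k v with h | ⟨x, -, -, h⟩ <;> rw [h]
  · exact Nat.zero_le _
  · exact length_block_le_pow_mul E x v

theorem isLeft_of_mem_prevBlockS {u : Fin m} {k : ℕ} {c : Letter m n}
    (hc : c ∈ prevBlockS E u k) : c.isLeft := by
  rcases prevBlockS_eq_nil_or E u k with h | ⟨y, -, -, h⟩ <;> rw [h] at hc
  · simp at hc
  · exact isLeft_of_mem_block E hc

theorem isLeft_of_mem_prevBlockP {k : ℕ} {v : Fin n} {c : Letter m n}
    (hc : c ∈ prevBlockP E k v) : c.isLeft := by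
  rcases prevBlockP_eq_nil_or E k v with h | ⟨x, -, -, h⟩ <;> rw [h] at hc
  · simp at hc
  · exact isLeft_of_mem_block E hc

theorem isOverlapLabeling_labelS_labelP :
    IsOverlapLabeling E (3 ^ (m * n)) (labelS E) (labelP E) := by
  refine ⟨fun u => ?_, fun v => ?_, fun u v => ?_⟩
  · simp only [labelS, length_append, length_replicate]
    have := length_prevBlockS_le E u n
    omega
  · simp only [labelP, length_append, length_replicate]
    have := length_prevBlockP_le E m v
    omega
  rw [exists_overlapsBy_iff]
  constructor
  · intro huv
    refine ⟨block E u v, ?_, (block_suffix_prevBlockS huv v.2).trans (suffix_append _ _),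
      (block_prefix_prevBlockP huv u.2).trans (prefix_append _ _)⟩
    rw [block_eq]
    simp
  · rintro ⟨t, ht, hts, htp⟩
    have hts' : t <:+ prevBlockS E u n := suffix_of_suffix_replicate_append hts fun hc => by
      rcases mem_append.1 (htp.subset hc) with hc | hc
      · exact absurd (isLeft_of_mem_prevBlockP E hc) (by simp)
      · simp at hc
    have htp' : t <+: prevBlockP E m v := prefix_of_prefix_append_replicate htp fun hc => by
      rcases mem_append.1 (hts.subset hc) with hc | hc
      · simp at hc
      · exact absurd (isLeft_of_mem_prevBlockS E hc) (by simp)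
    rcases prevBlockS_eq_nil_or E u n with h | ⟨y, hy, -, h⟩
    · exact absurd (suffix_nil.1 (h ▸ hts')) ht
    rcases prevBlockP_eq_nil_or E m v with h' | ⟨x, hx, -, h'⟩
    · exact absurd (prefix_nil.1 (h' ▸ htp')) ht
    exact edge_of_suffix_block_of_prefix_block hy hx ht (h ▸ hts') (h' ▸ htp')

end Construction

theorem IsOverlapLabeling.map {α β Vs Vp : Type*} {E : Vs → Vp → Prop} {r : ℕ}
    {ls : Vs → List α} {lp : Vp → List α} (h : IsOverlapLabeling E r ls lp) {f : α → β}
    (hf : Injective f) :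
    IsOverlapLabeling E r (fun u => (ls u).map f) (fun v => (lp v).map f) :=
  ⟨fun u => by simp [h.1], fun v => by simp [h.2.1], fun u v => by
    simp only [overlapsBy_map_iff hf, h.2.2]⟩

theorem exists_isOverlapLabeling_bReadability {m n : ℕ} (E : Fin m → Fin n → Prop) :
    ∃ ls lp : _ → List ℕ, IsOverlapLabeling E (bReadability E) ls lp := by
  obtain ⟨f, hf⟩ := exists_injective_nat (Letter m n)
  have hne : {r | ∃ (ls : Fin m → List ℕ) (lp : Fin n → List ℕ),
      IsOverlapLabeling E r ls lp}.Nonempty :=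
    ⟨_, _, _, (isOverlapLabeling_labelS_labelP E).map hf⟩
  exact Nat.sInf_mem hne

section Digraph

variable {V : Type*} {ι : V → ℕ} {ls lp : V → List ℕ} {r : ℕ}

def digraphLabel (ι : V → ℕ) (ls lp : V → List ℕ) (w : V) : List ℕ :=
  (lp w).map (2 * · + 1) ++ 2 * ι w :: (ls w).map (2 * · + 1)

theorem overlapsBy_digraphLabel_iff (hls : ∀ w, (ls w).length = r)
    (hlp : ∀ w, (lp w).length = r) (a b : V) {i : ℕ} (hi : i < 2 * r + 1) :
    OverlapsBy (digraphLabel ι ls lp a) (digraphLabel ι ls lp b) i ↔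
      OverlapsBy (ls a) (lp b) i := by
  by_cases hir : i ≤ r
  · have hodd : Injective (2 * · + 1 : ℕ → ℕ) := fun _ _ h => by simp only at h; omega
    have ha : digraphLabel ι ls lp a =
        ((lp a).map (2 * · + 1) ++ [2 * ι a]) ++ (ls a).map (2 * · + 1) := by
      simp [digraphLabel]
    rw [ha, digraphLabel, overlapsBy_append_append_iff _ _ (by simpa [hls] using hir)
      (by simpa [hlp] using hir), overlapsBy_map_iff hodd]
  · refine iff_of_false (not_overlapsBy_append_cons _ ?_ ?_ ?_) fun h => ?_
    · simp only [mem_map, not_exists, not_and]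
      omega
    · simp [hlp]; omega
    · simp [hls, hlp]; omega
    · have := h.2.1
      simp only [hls, hlp, min_self] at this
      omega

theorem IsOverlapLabeling.isInjOverlapLabeling_digraphLabel {E : V → V → Prop}
    (h : IsOverlapLabeling E r ls lp) (hι : Injective ι) :
    IsInjOverlapLabeling E (2 * r + 1) (digraphLabel ι ls lp) := by
  obtain ⟨hls, hlp, hE⟩ := h
  refine ⟨fun w => ?_, fun a b hab => ?_, fun a b => ?_⟩
  · simp [digraphLabel, hls, hlp]
    omega
  · have := congrArg (·[r]?) hab
    simp [digraphLabel, hlp] at this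
    exact hι (by omega)
  · rw [hE, ov_pos_and_lt_iff]
    constructor
    · rintro ⟨i, hi⟩
      have hir : i ≤ r := by simpa [hls, hlp] using hi.2.1
      exact ⟨i, by omega, (overlapsBy_digraphLabel_iff hls hlp a b (by omega)).2 hi⟩
    · rintro ⟨i, hi, hov⟩
      exact ⟨i, (overlapsBy_digraphLabel_iff hls hlp a b hi).1 hov⟩

end Digraph

/-- For every balanced bipartite graph `G` on parts `Fin n`, the digraph `ψ(G)`
on `Fin n` with arcs `(u,v)` exactly when `(u_s, v_p)` is an edge of `G` satisfies
`r(ψ(G)) ≤ 2·r(G) + 1`. -/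
theorem statement2 (n : ℕ) (E : Fin n → Fin n → Prop) :
    dReadability E ≤ 2 * bReadability E + 1 := by
  obtain ⟨ls, lp, h⟩ := exists_isOverlapLabeling_bReadability E
  exact Nat.sInf_le ⟨_, h.isInjOverlapLabeling_digraphLabel Fin.val_injective⟩

end Readability
end

section
/- Let G = (V_s, V_p, E) be a C4-free bipartite graph and let w : E → {1,…,k} be a decomposition of G satisfying the strict P4-rule. Then there exists an overlap labeling ℓ of G of length k such that for every edge e ∈ E, the minimum overlap ov_ℓ(e) equals w(e). In particular, r(G) ≤ k. -/
/-!
Induction on `k`. The edges of the maximal weight `k` form a star forest: for such an edge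
`(u, v)` and further edges `(x, v)`, `(u, q)`, the path `x v u q` is an induced `P₄` (by
`C₄`-freeness), so the strict `P₄`-rule gives `w(x, v) + w(u, q) < k`. Take labels of length
`k - 1` realising the lighter edges. In the new labels, of length `k`, each vertex of `Vp` keeps the
old prefix and each vertex of `Vs` the old suffix of the length of its heaviest lighter edge; the
inequality above leaves room for both when they share a top edge. All vertices of one top star get
the same label, filled in between with fresh letters tagged by the star and by their position. A
fresh letter only matches itself at the same position, so no proper shift aligns two fresh
letters; this forces every overlap of length `< k` to come from an old one, and an overlap of
length `k` to come from a common star.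
-/

namespace Readability

open Function

section WeightStructure

variable {Vs Vp : Type*} {E : Vs → Vp → Prop} {w : Vs → Vp → ℕ}

theorem C4Free.mono {E' : Vs → Vp → Prop} (hC : C4Free E) (h : ∀ u v, E' u v → E u v) :
    C4Free E' := fun s1 s2 p1 p2 hs hp ⟨h1, h2, h3, h4⟩ =>
  hC s1 s2 p1 p2 hs hp ⟨h _ _ h1, h _ _ h2, h _ _ h3, h _ _ h4⟩

theorem SatisfiesStrictP4Rule.mono {E' : Vs → Vp → Prop} (hP : SatisfiesStrictP4Rule E w)
    (hC : C4Free E) (h : ∀ u v, E' u v → E u v) : SatisfiesStrictP4Rule E' w := by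
  rintro s1 s2 p1 p2 ⟨hs, hp, h1, h2, h3, -⟩ hmax
  by_cases h4 : E s1 p2
  · exact absurd ⟨h _ _ h1, h4, h _ _ h2, h _ _ h3⟩ (hC s1 s2 p1 p2 hs hp)
  · exact hP s1 s2 p1 p2 ⟨hs, hp, h _ _ h1, h _ _ h2, h _ _ h3, h4⟩ hmax

theorem weight_add_lt_of_isMax (hC : C4Free E) (hP : SatisfiesStrictP4Rule E w)
    {u x : Vs} {v q : Vp} (huv : E u v) (hmax : ∀ a b, E a b → w a b ≤ w u v)
    (hxv : E x v) (huq : E u q) (hxu : x ≠ u) (hqv : q ≠ v) : w x v + w u q < w u v := by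
  have hxq : ¬ E x q := fun hxq => hC x u v q hxu hqv.symm ⟨hxv, hxq, huv, huq⟩
  refine hP x u v q ⟨hxu, hqv.symm, hxv, huv, huq, hxq⟩ ?_
  have := hmax x v hxv
  have := hmax u q huq
  omega

end WeightStructure

section StarForest

variable {α β : Type*} {R : α → β → Prop} {a a' : α} {b : β}

def IsStarForest (R : α → β → Prop) : Prop :=
  ∀ a a' b b', R a b → R a' b → R a' b' → a = a' ∨ b = b'

open Classical in
noncomputable def soleNeighbor (R : α → β → Prop) (a : α) : Option β :=
  if h : ∃! b, R a b then some h.exists.choose else none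

open Classical in
noncomputable def selfUnlessSibling (R : α → β → Prop) (a : α) : Option α :=
  if ∃ b, R a b ∧ ∃ a', a' ≠ a ∧ R a' b then none else some a

theorem soleNeighbor_eq_some : soleNeighbor R a = some b ↔ ∀ b', R a b' ↔ b' = b := by
  unfold soleNeighbor
  split_ifs with h
  · refine ⟨fun hb b' => ?_, fun hb => ?_⟩
    · obtain rfl := Option.some_injective _ hb
      exact ⟨fun hb' => h.unique hb' h.exists.choose_spec, fun hb' => hb' ▸ h.exists.choose_spec⟩
    · exact congrArg some ((hb _).1 h.exists.choose_spec)
  · exact ⟨nofun, fun hb => absurd ⟨b, (hb b).2 rfl, fun b' => (hb b').1⟩ h⟩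

theorem soleNeighbor_eq_none : soleNeighbor R a = none ↔ ¬ ∃! b, R a b := by
  unfold soleNeighbor
  split_ifs with h <;> simp [h]

theorem rel_of_soleNeighbor_eq_some (h : soleNeighbor R a = some b) : R a b :=
  (soleNeighbor_eq_some.1 h b).2 rfl

theorem selfUnlessSibling_eq_none :
    selfUnlessSibling R a = none ↔ ∃ b, R a b ∧ ∃ a', a' ≠ a ∧ R a' b := by
  unfold selfUnlessSibling
  split_ifs with h <;> simp [h]

theorem eq_of_selfUnlessSibling_eq_some (h : selfUnlessSibling R a = some a') : a' = a := by
  unfold selfUnlessSibling at h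
  split_ifs at h
  exact (Option.some_injective _ h).symm

theorem isStarForest_flip (hR : IsStarForest R) : IsStarForest (flip R) :=
  fun b b' a a' hab hab' ha'b' => (hR a' a b' b ha'b' hab' hab).symm.imp Eq.symm Eq.symm

theorem IsStarForest.soleNeighbor_eq (hR : IsStarForest R) (hab : R a b) :
    soleNeighbor R a = selfUnlessSibling (flip R) b := by
  by_cases h : ∃! b', R a b'
  · have hsole : soleNeighbor R a = some b :=
      soleNeighbor_eq_some.2 fun b' => ⟨fun hb' => h.unique hb' hab, fun hb' => hb' ▸ hab⟩
    rw [hsole, selfUnlessSibling, if_neg]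
    rintro ⟨a', ha'b, b', hb', ha'b'⟩
    obtain rfl | rfl := hR a a' b b' hab ha'b ha'b'
    · exact hb' (h.unique ha'b' hab)
    · exact hb' rfl
  · obtain ⟨b', hab', hb'⟩ : ∃ b', R a b' ∧ b' ≠ b := by
      by_contra! hne
      exact h ⟨b, hab, hne⟩
    rw [soleNeighbor_eq_none.2 h, eq_comm, selfUnlessSibling_eq_none]
    exact ⟨a, hab, b', hb', hab'⟩

theorem IsStarForest.rel_iff (hR : IsStarForest R) :
    (soleNeighbor R a, selfUnlessSibling R a) =
      (selfUnlessSibling (flip R) b, soleNeighbor (flip R) b) ↔ R a b := by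
  refine ⟨fun h => ?_, fun hab => ?_⟩
  · obtain ⟨hhead, htail⟩ := Prod.mk.inj h
    rcases hb : selfUnlessSibling (flip R) b with _ | b'
    · rcases ha : selfUnlessSibling R a with _ | a'
      · obtain ⟨b', hab', a', ha', ha'b'⟩ := selfUnlessSibling_eq_none.1 ha
        obtain ⟨b'', hab'', hb''⟩ : ∃ b'', R a b'' ∧ b'' ≠ b' := by
          by_contra! hne
          exact soleNeighbor_eq_none.1 (hhead.trans hb) ⟨b', hab', hne⟩
        exact ((hR a' a b' b'' ha'b' hab' hab'').elim ha' (Ne.symm hb'')).elim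
      · obtain rfl := eq_of_selfUnlessSibling_eq_some ha
        exact rel_of_soleNeighbor_eq_some (R := flip R) (htail.symm.trans ha)
    · obtain rfl := eq_of_selfUnlessSibling_eq_some hb
      exact rel_of_soleNeighbor_eq_some (hhead.trans hb)
  · exact Prod.ext (hR.soleNeighbor_eq hab) (isStarForest_flip hR |>.soleNeighbor_eq hab).symm

end StarForest

section Labels

variable {Vs Vp : Type*}

/-- Labels of length `K` are encoded as functions `ℕ → α` read on `[0, K)`. -/
def OverlapAt {α : Type*} (K : ℕ) (f g : ℕ → α) (m : ℕ) : Prop :=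
  ∀ t < m, f (K - m + t) = g t

def RealizesWeights (E : Vs → Vp → Prop) (w : Vs → Vp → ℕ) (K : ℕ)
    (fs : Vs → ℕ → ℕ) (fp : Vp → ℕ → ℕ) : Prop :=
  ∀ u v m, 1 ≤ m → m ≤ K → (OverlapAt K (fs u) (fp v) m ↔ E u v ∧ w u v = m)

end Labels

section MaxWeight

variable {α β : Type*} {E : α → β → Prop} {w : α → β → ℕ} {K : ℕ} {a : α} {b : β}

open Classical

noncomputable def maxWeight (E : α → β → Prop) (w : α → β → ℕ) (K : ℕ) (a : α) : ℕ :=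
  Nat.findGreatest (fun m => ∃ b, E a b ∧ w a b = m) K

theorem maxWeight_le : maxWeight E w K a ≤ K :=
  Nat.findGreatest_le K

theorem le_maxWeight (hab : E a b) (h : w a b ≤ K) : w a b ≤ maxWeight E w K a :=
  Nat.le_findGreatest h ⟨b, hab, rfl⟩

theorem exists_weight_eq_maxWeight (h : maxWeight E w K a ≠ 0) :
    ∃ b, E a b ∧ w a b = maxWeight E w K a :=
  Nat.findGreatest_of_ne_zero rfl h

theorem maxWeight_eq_zero (h : ∀ b, E a b → K < w a b) : maxWeight E w K a = 0 :=
  Nat.findGreatest_eq_zero_iff.2 fun _ _ hm ⟨b, hab, hb⟩ => by have := h b hab; omega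

end MaxWeight

section TopWeight

variable {Vs Vp : Type*} {E : Vs → Vp → Prop} {w : Vs → Vp → ℕ} {K : ℕ}

theorem add_le_of_subAt (hC : C4Free E) (hw : IsDecomposition E (K + 1) w)
    (hP : SatisfiesStrictP4Rule E w) {u x : Vs} {v q : Vp} (huv : SubAt E w (K + 1) u v)
    (hxv : E x v) (huq : E u q) (hxu : x ≠ u) (hqv : q ≠ v) : w x v + w u q ≤ K := by
  have := weight_add_lt_of_isMax hC hP huv.1 (fun a b hab => huv.2 ▸ (hw a b hab).2)
    hxv huq hxu hqv
  have := huv.2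
  omega

theorem isStarForest_subAt (hC : C4Free E) (hw : IsDecomposition E (K + 1) w)
    (hP : SatisfiesStrictP4Rule E w) : IsStarForest (SubAt E w (K + 1)) := by
  intro a a' b b' hab ha'b ha'b'
  by_contra! h
  have := add_le_of_subAt hC hw hP ha'b hab.1 ha'b'.1 h.1 (Ne.symm h.2)
  have := hab.2
  omega

theorem maxWeight_eq_zero_of_sibling (hC : C4Free E) (hw : IsDecomposition E (K + 1) w)
    (hP : SatisfiesStrictP4Rule E w) {u : Vs}
    (h : selfUnlessSibling (SubAt E w (K + 1)) u = none) : maxWeight E w K u = 0 := by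
  obtain ⟨v, huv, u', hu', hu'v⟩ := selfUnlessSibling_eq_none.1 h
  refine maxWeight_eq_zero fun q huq => ?_
  by_contra! hle
  have hqv : q ≠ v := by rintro rfl; have := huv.2; omega
  have := add_le_of_subAt hC hw hP huv hu'v.1 huq hu' hqv
  have := hu'v.2
  omega

theorem maxWeight_flip_eq_zero_of_sibling (hC : C4Free E) (hw : IsDecomposition E (K + 1) w)
    (hP : SatisfiesStrictP4Rule E w) {v : Vp}
    (h : selfUnlessSibling (flip (SubAt E w (K + 1))) v = none) :
    maxWeight (flip E) (flip w) K v = 0 := by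
  obtain ⟨u, huv, v', hv', huv'⟩ := selfUnlessSibling_eq_none.1 h
  refine maxWeight_eq_zero fun x hxv => ?_
  by_contra! hle
  simp only [flip] at hle
  have hxu : x ≠ u := by rintro rfl; have := huv.2; omega
  have := add_le_of_subAt hC hw hP huv hxv huv'.1 hxu hv'
  have := huv'.2
  omega

theorem maxWeight_add_maxWeight_le (hC : C4Free E) (hw : IsDecomposition E (K + 1) w)
    (hP : SatisfiesStrictP4Rule E w) {u : Vs} {v : Vp} (huv : SubAt E w (K + 1) u v) :
    maxWeight (flip E) (flip w) K v + maxWeight E w K u ≤ K := by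
  by_cases hv0 : maxWeight (flip E) (flip w) K v = 0
  · simpa [hv0] using maxWeight_le
  by_cases hu0 : maxWeight E w K u = 0
  · simpa [hu0] using maxWeight_le
  obtain ⟨x, hxv, hx⟩ := exists_weight_eq_maxWeight hv0
  obtain ⟨q, huq, hq⟩ := exists_weight_eq_maxWeight hu0
  simp only [flip] at hx
  have hxK := hx ▸ maxWeight_le (E := flip E) (w := flip w) (K := K) (a := v)
  have hqK := hq ▸ maxWeight_le (E := E) (w := w) (K := K) (a := u)
  have hxu : x ≠ u := by rintro rfl; have := huv.2; omega
  have hqv : q ≠ v := by rintro rfl; have := huv.2; omega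
  have := add_le_of_subAt hC hw hP huv hxv huq hxu hqv
  omega

end TopWeight

section Splice

variable {Vs Vp : Type*} (E : Vs → Vp → Prop) (w : Vs → Vp → ℕ) (K : ℕ)
  (fs : Vs → ℕ → ℕ) (fp : Vp → ℕ → ℕ) (ι : ℕ ⊕ (Option Vp × Option Vs) × ℕ → ℕ)

noncomputable def headLen (a : Option Vp) : ℕ := a.elim 0 (maxWeight (flip E) (flip w) K)

noncomputable def tailLen (b : Option Vs) : ℕ := b.elim 0 (maxWeight E w K)

noncomputable def splice (c : Option Vp × Option Vs) (i : ℕ) : ℕ :=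
  if i < headLen E w K c.1 then ι (.inl (c.1.elim 0 (fp · i)))
  else if K + 1 - tailLen E w K c.2 ≤ i then ι (.inl (c.2.elim 0 (fs · (i - 1))))
  else ι (.inr (c, i))

/-- The top-weight star through a vertex is coded by its `Vp`-vertex and its `Vs`-vertex, each
recorded only when it is the only one of the star on its side. -/
noncomputable def starCodeS (u : Vs) : Option Vp × Option Vs :=
  (soleNeighbor (SubAt E w (K + 1)) u, selfUnlessSibling (SubAt E w (K + 1)) u)

noncomputable def starCodeP (v : Vp) : Option Vp × Option Vs :=
  (selfUnlessSibling (flip (SubAt E w (K + 1))) v, soleNeighbor (flip (SubAt E w (K + 1))) v)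

variable {E w K fs fp ι}

theorem headLen_add_tailLen_le {c : Option Vp × Option Vs} (hC : C4Free E)
    (hw : IsDecomposition E (K + 1) w) (hP : SatisfiesStrictP4Rule E w)
    (hc : ∀ u v, c.1 = some v → c.2 = some u → SubAt E w (K + 1) u v) :
    headLen E w K c.1 + tailLen E w K c.2 ≤ K := by
  rcases c with ⟨_ | v, _ | u⟩
  · simp [headLen, tailLen]
  · simpa [headLen, tailLen] using maxWeight_le
  · simpa [headLen, tailLen] using maxWeight_le
  · exact maxWeight_add_maxWeight_le hC hw hP (hc u v rfl rfl)

theorem headLen_add_tailLen_starCodeS_le (hC : C4Free E) (hw : IsDecomposition E (K + 1) w)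
    (hP : SatisfiesStrictP4Rule E w) (u : Vs) :
    headLen E w K (starCodeS E w K u).1 + tailLen E w K (starCodeS E w K u).2 ≤ K :=
  headLen_add_tailLen_le hC hw hP fun _ _ hv hu =>
    eq_of_selfUnlessSibling_eq_some hu ▸ rel_of_soleNeighbor_eq_some hv

theorem headLen_add_tailLen_starCodeP_le (hC : C4Free E) (hw : IsDecomposition E (K + 1) w)
    (hP : SatisfiesStrictP4Rule E w) (v : Vp) :
    headLen E w K (starCodeP E w K v).1 + tailLen E w K (starCodeP E w K v).2 ≤ K :=
  headLen_add_tailLen_le hC hw hP fun _ _ hv hu =>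
    eq_of_selfUnlessSibling_eq_some hv ▸
      rel_of_soleNeighbor_eq_some (R := flip (SubAt E w (K + 1))) hu

theorem tailLen_starCodeS (hC : C4Free E) (hw : IsDecomposition E (K + 1) w)
    (hP : SatisfiesStrictP4Rule E w) (u : Vs) :
    tailLen E w K (starCodeS E w K u).2 = maxWeight E w K u := by
  rcases h : selfUnlessSibling (SubAt E w (K + 1)) u with _ | u'
  · simp only [starCodeS, h, tailLen, Option.elim_none]
    exact (maxWeight_eq_zero_of_sibling hC hw hP h).symm
  · simp [starCodeS, h, tailLen, eq_of_selfUnlessSibling_eq_some h]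

theorem headLen_starCodeP (hC : C4Free E) (hw : IsDecomposition E (K + 1) w)
    (hP : SatisfiesStrictP4Rule E w) (v : Vp) :
    headLen E w K (starCodeP E w K v).1 = maxWeight (flip E) (flip w) K v := by
  rcases h : selfUnlessSibling (flip (SubAt E w (K + 1))) v with _ | v'
  · simp only [starCodeP, h, headLen, Option.elim_none]
    exact (maxWeight_flip_eq_zero_of_sibling hC hw hP h).symm
  · simp [starCodeP, h, headLen, eq_of_selfUnlessSibling_eq_some h]

theorem splice_of_headLen_le_of_lt {c : Option Vp × Option Vs} {i : ℕ}
    (h1 : headLen E w K c.1 ≤ i) (h2 : i < K + 1 - tailLen E w K c.2) :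
    splice E w K fs fp ι c i = ι (.inr (c, i)) := by
  simp [splice, not_lt.2 h1, not_le.2 h2]

theorem eq_of_splice_eq_inr (hι : Injective ι) {c c' : Option Vp × Option Vs} {i j : ℕ}
    (h : splice E w K fs fp ι c i = ι (.inr (c', j))) : c' = c ∧ j = i := by
  unfold splice at h
  split_ifs at h
  · simp [hι.eq_iff] at h
  · simp [hι.eq_iff] at h
  · simp only [hι.eq_iff, Sum.inr.injEq, Prod.mk.injEq] at h
    exact ⟨h.1.symm, h.2.symm⟩

theorem splice_starCodeS_of_le (hC : C4Free E) (hw : IsDecomposition E (K + 1) w)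
    (hP : SatisfiesStrictP4Rule E w) {u : Vs} {i : ℕ} (h1 : K + 1 - maxWeight E w K u ≤ i)
    (h2 : i ≤ K) : splice E w K fs fp ι (starCodeS E w K u) i = ι (.inl (fs u (i - 1))) := by
  have hgap := headLen_add_tailLen_starCodeS_le hC hw hP u
  rw [tailLen_starCodeS hC hw hP] at hgap
  have htail : (starCodeS E w K u).2 = some u := by
    rcases h : selfUnlessSibling (SubAt E w (K + 1)) u with _ | u'
    · have := maxWeight_eq_zero_of_sibling hC hw hP h
      omega
    · obtain rfl := eq_of_selfUnlessSibling_eq_some h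
      exact h
  rw [splice, if_neg (by omega), if_pos (by rw [tailLen_starCodeS hC hw hP]; omega), htail]
  rfl

theorem splice_starCodeP_of_lt (hC : C4Free E) (hw : IsDecomposition E (K + 1) w)
    (hP : SatisfiesStrictP4Rule E w) {v : Vp} {t : ℕ}
    (h : t < maxWeight (flip E) (flip w) K v) :
    splice E w K fs fp ι (starCodeP E w K v) t = ι (.inl (fp v t)) := by
  have hhead : (starCodeP E w K v).1 = some v := by
    rcases h' : selfUnlessSibling (flip (SubAt E w (K + 1))) v with _ | v'
    · have := maxWeight_flip_eq_zero_of_sibling hC hw hP h'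
      omega
    · obtain rfl := eq_of_selfUnlessSibling_eq_some h'
      exact h'
  rw [splice, if_pos (by rw [headLen_starCodeP hC hw hP]; exact h), hhead]
  rfl

end Splice

section Extension

variable {Vs Vp : Type*} {E : Vs → Vp → Prop} {w : Vs → Vp → ℕ} {K : ℕ}
  {fs : Vs → ℕ → ℕ} {fp : Vp → ℕ → ℕ} {ι : ℕ ⊕ (Option Vp × Option Vs) × ℕ → ℕ}

theorem overlapAt_splice_top_iff (hι : Injective ι) (hC : C4Free E)
    (hw : IsDecomposition E (K + 1) w) (hP : SatisfiesStrictP4Rule E w) {u : Vs} {v : Vp} :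
    OverlapAt (K + 1) (splice E w K fs fp ι (starCodeS E w K u))
      (splice E w K fs fp ι (starCodeP E w K v)) (K + 1) ↔ SubAt E w (K + 1) u v := by
  have hstar := isStarForest_subAt hC hw hP
  refine ⟨fun h => hstar.rel_iff.1 ?_, fun huv t _ => ?_⟩
  · have hgap := headLen_add_tailLen_starCodeS_le hC hw hP u
    set i := headLen E w K (starCodeS E w K u).1
    have hi := h i (by omega)
    rw [Nat.sub_self, zero_add, splice_of_headLen_le_of_lt le_rfl (by omega)] at hi
    exact (eq_of_splice_eq_inr hι hi.symm).1
  · rw [Nat.sub_self, zero_add, show starCodeS E w K u = starCodeP E w K v from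
      hstar.rel_iff.2 huv]

theorem le_maxWeight_of_overlapAt_splice (hι : Injective ι) (hC : C4Free E)
    (hw : IsDecomposition E (K + 1) w) (hP : SatisfiesStrictP4Rule E w) {u : Vs} {v : Vp}
    {m : ℕ} (hm : m ≤ K) (h : OverlapAt (K + 1) (splice E w K fs fp ι (starCodeS E w K u))
      (splice E w K fs fp ι (starCodeP E w K v)) m) :
    m ≤ maxWeight E w K u ∧ m ≤ maxWeight (flip E) (flip w) K v := by
  constructor
  · by_contra! hlt
    have hgap := headLen_add_tailLen_starCodeS_le hC hw hP u
    rw [tailLen_starCodeS hC hw hP] at hgap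
    have ht := h (m - 1 - maxWeight E w K u) (by omega)
    rw [show K + 1 - m + (m - 1 - maxWeight E w K u) = K - maxWeight E w K u by omega,
      splice_of_headLen_le_of_lt (by omega) (by rw [tailLen_starCodeS hC hw hP]; omega)] at ht
    have := (eq_of_splice_eq_inr hι ht.symm).2
    omega
  · by_contra! hlt
    have hgap := headLen_add_tailLen_starCodeP_le hC hw hP v
    rw [headLen_starCodeP hC hw hP] at hgap
    have ht := h (maxWeight (flip E) (flip w) K v) hlt
    rw [splice_of_headLen_le_of_lt (c := starCodeP E w K v) (headLen_starCodeP hC hw hP v).le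
      (by omega)] at ht
    have := (eq_of_splice_eq_inr hι ht).2
    omega

theorem overlapAt_splice_iff_of_le (hι : Injective ι) (hC : C4Free E)
    (hw : IsDecomposition E (K + 1) w) (hP : SatisfiesStrictP4Rule E w) {u : Vs} {v : Vp}
    {m : ℕ} (hu : m ≤ maxWeight E w K u) (hv : m ≤ maxWeight (flip E) (flip w) K v) :
    OverlapAt (K + 1) (splice E w K fs fp ι (starCodeS E w K u))
      (splice E w K fs fp ι (starCodeP E w K v)) m ↔ OverlapAt K (fs u) (fp v) m := by
  have := maxWeight_le (E := E) (w := w) (K := K) (a := u)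
  refine forall₂_congr fun t ht => ?_
  rw [splice_starCodeS_of_le hC hw hP (by omega) (by omega), splice_starCodeP_of_lt hC hw hP
    (by omega), hι.eq_iff, Sum.inl.injEq, show K + 1 - m + t - 1 = K - m + t by omega]

theorem overlapAt_splice_iff (hι : Injective ι) (hC : C4Free E)
    (hw : IsDecomposition E (K + 1) w) (hP : SatisfiesStrictP4Rule E w)
    (hlow : RealizesWeights (fun u v => E u v ∧ w u v ≤ K) w K fs fp) {u : Vs} {v : Vp} {m : ℕ}
    (hm1 : 1 ≤ m) (hm : m ≤ K) :
    OverlapAt (K + 1) (splice E w K fs fp ι (starCodeS E w K u))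
      (splice E w K fs fp ι (starCodeP E w K v)) m ↔ E u v ∧ w u v = m := by
  constructor
  · intro h
    obtain ⟨hu, hv⟩ := le_maxWeight_of_overlapAt_splice hι hC hw hP hm h
    obtain ⟨⟨huv, -⟩, rfl⟩ :=
      (hlow u v m hm1 hm).1 ((overlapAt_splice_iff_of_le hι hC hw hP hu hv).1 h)
    exact ⟨huv, rfl⟩
  · rintro ⟨huv, rfl⟩
    refine (overlapAt_splice_iff_of_le hι hC hw hP (le_maxWeight huv hm)
      (le_maxWeight (E := flip E) (w := flip w) huv hm)).2 ?_
    exact (hlow u v _ hm1 hm).2 ⟨⟨huv, hm⟩, rfl⟩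

theorem RealizesWeights.extend [Countable Vs] [Countable Vp] (hC : C4Free E)
    (hw : IsDecomposition E (K + 1) w) (hP : SatisfiesStrictP4Rule E w)
    (hlow : RealizesWeights (fun u v => E u v ∧ w u v ≤ K) w K fs fp) :
    ∃ fs' fp', RealizesWeights E w (K + 1) fs' fp' := by
  obtain ⟨ι, hι⟩ := Countable.exists_injective_nat (ℕ ⊕ (Option Vp × Option Vs) × ℕ)
  refine ⟨fun u => splice E w K fs fp ι (starCodeS E w K u),
    fun v => splice E w K fs fp ι (starCodeP E w K v), fun u v m hm1 hm => ?_⟩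
  obtain hm | rfl := Nat.lt_succ_iff_lt_or_eq.1 (Nat.lt_succ_of_le hm)
  · exact overlapAt_splice_iff hι hC hw hP hlow hm1 (Nat.le_of_lt_succ hm)
  · exact overlapAt_splice_top_iff hι hC hw hP

end Extension

theorem exists_realizesWeights {Vs Vp : Type*} [Countable Vs] [Countable Vp] (K : ℕ) :
    ∀ (E : Vs → Vp → Prop) (w : Vs → Vp → ℕ), C4Free E → IsDecomposition E K w →
      SatisfiesStrictP4Rule E w → ∃ fs fp, RealizesWeights E w K fs fp := by
  induction K with
  | zero => exact fun _ _ _ _ _ => ⟨fun _ _ => 0, fun _ _ => 0, fun _ _ _ h1 h2 => by omega⟩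
  | succ K ih =>
    intro E w hC hw hP
    have hsub : ∀ u v, E u v ∧ w u v ≤ K → E u v := fun _ _ h => h.1
    obtain ⟨fs, fp, hlow⟩ := ih _ w (hC.mono hsub) (fun u v h => ⟨(hw u v h.1).1, h.2⟩)
      (hP.mono hC hsub)
    exact hlow.extend hC hw hP

theorem overlapsBy_ofFn_iff {α : Type*} {k m : ℕ} {f g : ℕ → α} :
    OverlapsBy (List.ofFn fun i : Fin k => f i) (List.ofFn fun i : Fin k => g i) m ↔
      1 ≤ m ∧ m ≤ k ∧ OverlapAt k f g m := by
  simp only [OverlapsBy, List.length_ofFn, min_self]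
  refine and_congr_right fun _ => and_congr_right fun hm => ?_
  rw [List.ext_get_iff]
  simp only [List.length_drop, List.length_take, List.length_ofFn, List.get_eq_getElem,
    List.getElem_drop, List.getElem_take, List.getElem_ofFn]
  exact ⟨fun h t ht => h.2 t (by omega) (by omega),
    fun h => ⟨by omega, fun t _ ht => h t (by omega)⟩⟩

section Realization

variable {Vs Vp : Type*} {E : Vs → Vp → Prop} {w : Vs → Vp → ℕ} {k : ℕ}
  {fs : Vs → ℕ → ℕ} {fp : Vp → ℕ → ℕ}

theorem RealizesWeights.overlapsBy_iff (h : RealizesWeights E w k fs fp)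
    (hw : IsDecomposition E k w) {u : Vs} {v : Vp} {m : ℕ} :
    OverlapsBy (List.ofFn fun i : Fin k => fs u i) (List.ofFn fun i : Fin k => fp v i) m ↔
      E u v ∧ w u v = m := by
  rw [overlapsBy_ofFn_iff]
  constructor
  · rintro ⟨hm1, hm, hov⟩
    exact (h u v m hm1 hm).1 hov
  · rintro ⟨huv, rfl⟩
    obtain ⟨hm1, hm⟩ := hw u v huv
    exact ⟨hm1, hm, (h u v _ hm1 hm).2 ⟨huv, rfl⟩⟩

theorem RealizesWeights.isOverlapLabeling (h : RealizesWeights E w k fs fp)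
    (hw : IsDecomposition E k w) :
    IsOverlapLabeling E k (fun u => List.ofFn fun i : Fin k => fs u i)
      (fun v => List.ofFn fun i : Fin k => fp v i) :=
  ⟨fun _ => List.length_ofFn, fun _ => List.length_ofFn, fun _ _ =>
    ⟨fun huv => ⟨_, (h.overlapsBy_iff hw).2 ⟨huv, rfl⟩⟩,
      fun ⟨_, hov⟩ => ((h.overlapsBy_iff hw).1 hov).1⟩⟩

theorem RealizesWeights.ov_eq (h : RealizesWeights E w k fs fp) (hw : IsDecomposition E k w)
    {u : Vs} {v : Vp} (huv : E u v) :
    ov (List.ofFn fun i : Fin k => fs u i) (List.ofFn fun i : Fin k => fp v i) = w u v := by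
  have hset : {i | OverlapsBy (List.ofFn fun i : Fin k => fs u i)
      (List.ofFn fun i : Fin k => fp v i) i} = {w u v} := by
    ext i
    rw [Set.mem_ofPred_eq, h.overlapsBy_iff hw, Set.mem_singleton_iff, eq_comm]
    exact and_iff_right huv
  rw [ov, hset, csInf_singleton]

end Realization

/-- If `G` is a `C₄`-free bipartite graph and `w : E → {1,…,k}` is a decomposition
satisfying the strict P4-rule, then there is an overlap labeling `ℓ` of `G` of length `k`
with `ov_ℓ(e) = w(e)` on every edge; in particular `r(G) ≤ k`. -/
theorem statement6 {Vs Vp : Type*} [Fintype Vs] [Fintype Vp] (E : Vs → Vp → Prop)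
    (hC : C4Free E) (k : ℕ) (w : Vs → Vp → ℕ)
    (hw : IsDecomposition E k w) (hP : SatisfiesStrictP4Rule E w) :
    (∃ (ls : Vs → List ℕ) (lp : Vp → List ℕ), IsOverlapLabeling E k ls lp ∧
        ∀ u v, E u v → ov (ls u) (lp v) = w u v) ∧
      bReadability E ≤ k := by
  obtain ⟨fs, fp, h⟩ := exists_realizesWeights k E w hC hw hP
  have hlab := h.isOverlapLabeling hw
  exact ⟨⟨_, _, hlab, fun _ _ huv => h.ov_eq hw huv⟩, Nat.sInf_le ⟨_, _, hlab⟩⟩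

end Readability
end
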